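/- arXiv:2212.06132 — 2 statements merged into one kernel-verified Lean document; each statement's English description precedes it below -/
import Mathlib

section
/- Let A, B be d×d real positive definite matrices with A ⪰ B (i.e., A − B is positive semidefinite). Then for any vector x ∈ ℝ^d, ‖x‖_A ≤ ‖x‖_B · √(det A / det B), where ‖x‖_M := √(xᵀ M x). -/
/-!
Put `S = B^{1/2}` and `M = S⁻¹ A S⁻¹`. From `B ⪯ A` we get `1 ⪯ M`, so every eigenvalue of `M`
is at least `1` and hence at most their product `det M = det A / det B`. Thus `M ⪯ (det M) • 1`,
and conjugating back by `S` gives `A ⪯ (det A / det B) • B`; evaluating both quadratic forms at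
`x` and taking square roots is the claim.
-/

open Matrix
open scoped MatrixOrder

namespace Matrix

variable {n : Type*} [Fintype n]

open scoped ComplexOrder in
theorem dotProduct_mulVec_le_of_le {𝕜 : Type*} [RCLike 𝕜] {A B : Matrix n n 𝕜} (hAB : A ≤ B)
    (x : n → 𝕜) :
    star x ⬝ᵥ A *ᵥ x ≤ star x ⬝ᵥ B *ᵥ x := by
  have := hAB.dotProduct_mulVec_nonneg x
  rwa [sub_mulVec, dotProduct_sub, sub_nonneg] at this

variable [DecidableEq n]

theorem le_det_smul_one_of_one_le {M : Matrix n n ℝ} (hM : 1 ≤ M) : M ≤ M.det • 1 := by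
  have hHerm : M.IsHermitian := by simpa using (le_iff.mp hM).isHermitian.add isHermitian_one
  have hSpec := hHerm.spectrum_real_eq_range_eigenvalues
  have one_le_eig (i : n) : 1 ≤ hHerm.eigenvalues i :=
    (CFC.one_le_iff M hHerm).mp hM _ (hSpec ▸ Set.mem_range_self i)
  rw [← Algebra.algebraMap_eq_smul_one, le_algebraMap_iff_spectrum_le hHerm, hSpec]
  rintro _ ⟨i, rfl⟩
  rw [hHerm.det_eq_prod_eigenvalues]
  simpa using Finset.prod_le_prod_of_subset_of_one_le (Finset.subset_univ {i})
    (fun j _ => zero_le_one.trans (one_le_eig j)) (fun j _ _ => one_le_eig j)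

theorem le_det_div_det_smul_of_le {A B : Matrix n n ℝ} (hB : B.PosDef) (hBA : B ≤ A) :
    A ≤ (A.det / B.det) • B := by
  set S := CFC.sqrt B
  have hSS : S * S = B := CFC.sqrt_mul_sqrt_self B hB.posSemidef.nonneg
  have hS : star S = S := (CFC.sqrt_nonneg B).isSelfAdjoint.star_eq
  have hSdet : IsUnit S.det :=
    (isUnit_iff_isUnit_det S).mp <| (CFC.isUnit_sqrt_iff B hB.posSemidef.nonneg).mpr hB.isUnit
  have hT : star S⁻¹ = S⁻¹ := by
    rw [star_eq_conjTranspose, conjTranspose_nonsing_inv, ← star_eq_conjTranspose, hS]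
  have hTS : S⁻¹ * S = 1 := nonsing_inv_mul S hSdet
  have hST : S * S⁻¹ = 1 := mul_nonsing_inv S hSdet
  have one_le : 1 ≤ S⁻¹ * A * S⁻¹ := by
    calc (1 : Matrix n n ℝ) = star S⁻¹ * B * S⁻¹ := by
          rw [hT, ← hSS, ← mul_assoc, hTS, one_mul, hST]
      _ ≤ star S⁻¹ * A * S⁻¹ := star_left_conjugate_le_conjugate hBA _
      _ = S⁻¹ * A * S⁻¹ := by rw [hT]
  have hdet : (S⁻¹ * A * S⁻¹).det = A.det / B.det := by
    rw [det_mul, det_mul, det_nonsing_inv, ← hSS, det_mul, Ring.inverse_eq_inv']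
    field_simp
  calc A = star S * (S⁻¹ * A * S⁻¹) * S := by
        rw [hS, ← mul_assoc, ← mul_assoc, hST, one_mul, mul_assoc, hTS, mul_one]
    _ ≤ star S * ((S⁻¹ * A * S⁻¹).det • 1) * S :=
        star_left_conjugate_le_conjugate (le_det_smul_one_of_one_le one_le) S
    _ = (A.det / B.det) • B := by rw [hdet, hS, mul_smul_comm, mul_one, smul_mul_assoc, hSS]

end Matrix

theorem norm_le_of_loewner_general {d : ℕ} (A B : Matrix (Fin d) (Fin d) ℝ)
    (hB : B.PosDef) (hAB : (A - B).PosSemidef) (x : Fin d → ℝ) :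
    Real.sqrt (x ⬝ᵥ A.mulVec x) ≤
      Real.sqrt (x ⬝ᵥ B.mulVec x) * Real.sqrt (A.det / B.det) := by
  have hBx : 0 ≤ x ⬝ᵥ B *ᵥ x := by simpa using hB.posSemidef.dotProduct_mulVec_nonneg x
  have hAx : x ⬝ᵥ A *ᵥ x ≤ x ⬝ᵥ ((A.det / B.det) • B) *ᵥ x := by
    simpa using dotProduct_mulVec_le_of_le (le_det_div_det_smul_of_le hB hAB) x
  rw [← Real.sqrt_mul hBx]
  refine Real.sqrt_le_sqrt ?_
  simpa [smul_mulVec, mul_comm] using hAx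

theorem norm_le_of_loewner {d : ℕ} (A B : Matrix (Fin d) (Fin d) ℝ)
    (hA : A.PosDef) (hB : B.PosDef) (hAB : (A - B).PosSemidef) (x : Fin d → ℝ) :
    Real.sqrt (x ⬝ᵥ A.mulVec x) ≤
      Real.sqrt (x ⬝ᵥ B.mulVec x) * Real.sqrt (A.det / B.det) :=
  norm_le_of_loewner_general A B hB hAB x
end

section
/- Let Σ₀ be a d×d positive definite matrix, x₁,…,x_K ∈ ℝ^d, and define Σ_k = Σ₀ + Σ_{i=1}^k x_i x_iᵀ. Then Σ_{i=1}^k min{1, x_iᵀ Σ_{i-1}^{-1} x_i} ≤ 2 log(det Σ_k / det Σ₀). -/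
/-!
Since `Σᵢ = Σᵢ₋₁ + xᵢxᵢᵀ`, the matrix determinant lemma gives
`det Σᵢ = det Σᵢ₋₁ · (1 + xᵢᵀ Σᵢ₋₁⁻¹ xᵢ)`, so `log (det Σₖ / det Σ₀)` telescopes into
`∑ᵢ log (1 + xᵢᵀ Σᵢ₋₁⁻¹ xᵢ)`. Each term dominates half of the corresponding summand, because
`min 1 u ≤ 2 log (1 + u)` for `u ≥ 0`.
-/

open Matrix Finset

theorem Real.min_one_le_two_mul_log_one_add {u : ℝ} (hu : 0 ≤ u) :
    min 1 u ≤ 2 * Real.log (1 + u) := by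
  set m := min 1 u
  have hm0 : 0 ≤ m := le_min zero_le_one hu
  have hm1 : m ≤ 1 := min_le_left 1 u
  calc m ≤ 2 * (2 * m / (m + 2)) := by
        rw [mul_div_assoc', le_div_iff₀ (by positivity)]
        nlinarith
    _ ≤ 2 * Real.log (1 + m) := by gcongr; exact Real.le_log_one_add_of_nonneg hm0
    _ ≤ 2 * Real.log (1 + u) := by gcongr; exact min_le_right 1 u

namespace Matrix

variable {n : Type*} [Fintype n]

theorem posSemidef_vecMulVec_self (v : n → ℝ) : (vecMulVec v v).PosSemidef := by
  simpa using posSemidef_vecMulVec_self_star v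

variable [DecidableEq n]

theorem det_add_vecMulVec {α : Type*} [CommRing α] {A : Matrix n n α} (hA : IsUnit A.det)
    (u v : n → α) : (A + vecMulVec u v).det = A.det * (1 + v ⬝ᵥ A⁻¹ *ᵥ u) := by
  rw [vecMulVec_eq Unit, det_add_replicateCol_mul_replicateRow hA, Matrix.mul_assoc,
    ← replicateCol_mulVec, det_unique (n := Unit)]
  simp

theorem PosDef.min_one_le_two_mul_log_det_add_vecMulVec_self {A : Matrix n n ℝ}
    (hA : A.PosDef) (v : n → ℝ) :
    min 1 (v ⬝ᵥ A⁻¹ *ᵥ v) ≤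
      2 * (Real.log (A + vecMulVec v v).det - Real.log A.det) := by
  have hq : 0 ≤ v ⬝ᵥ A⁻¹ *ᵥ v := by simpa using hA.inv.posSemidef.dotProduct_mulVec_nonneg v
  rw [det_add_vecMulVec (isUnit_iff_ne_zero.mpr hA.det_pos.ne'),
    Real.log_mul hA.det_pos.ne' (by positivity), add_sub_cancel_left]
  exact Real.min_one_le_two_mul_log_one_add hq

theorem PosDef.sum_min_one_le_two_mul_log_det_div {S : ℕ → Matrix n n ℝ} (h0 : (S 0).PosDef)
    (x : ℕ → n → ℝ) (hS : ∀ i, S (i + 1) = S i + vecMulVec (x i) (x i)) (k : ℕ) :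
    ∑ i ∈ range k, min 1 (x i ⬝ᵥ (S i)⁻¹ *ᵥ x i) ≤ 2 * Real.log ((S k).det / (S 0).det) := by
  have hpos : ∀ i, (S i).PosDef := by
    intro i
    induction i with
    | zero => exact h0
    | succ i ih => exact hS i ▸ ih.add_posSemidef (posSemidef_vecMulVec_self (x i))
  calc ∑ i ∈ range k, min 1 (x i ⬝ᵥ (S i)⁻¹ *ᵥ x i)
      ≤ ∑ i ∈ range k, 2 * (Real.log (S (i + 1)).det - Real.log (S i).det) :=
        sum_le_sum fun i _ ↦ hS i ▸ (hpos i).min_one_le_two_mul_log_det_add_vecMulVec_self (x i)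
    _ = 2 * Real.log ((S k).det / (S 0).det) := by
        rw [← mul_sum, sum_range_sub (fun i ↦ Real.log (S i).det),
          Real.log_div (hpos k).det_pos.ne' h0.det_pos.ne']

end Matrix

theorem elliptical_potential_general {d : ℕ} (Sig0 : Matrix (Fin d) (Fin d) ℝ)
    (hSig0 : Sig0.PosDef) (x : ℕ → Fin d → ℝ)
    (Sig : ℕ → Matrix (Fin d) (Fin d) ℝ)
    (hSig : ∀ k, Sig k = Sig0 + ∑ i ∈ Finset.range k, vecMulVec (x i) (x i))
    (k : ℕ) :
    ∑ i ∈ Finset.range k, min 1 (x i ⬝ᵥ (Sig i)⁻¹.mulVec (x i)) ≤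
      2 * Real.log ((Sig k).det / Sig0.det) := by
  have hSig_zero : Sig 0 = Sig0 := by simp [hSig]
  have hSig_succ : ∀ i, Sig (i + 1) = Sig i + vecMulVec (x i) (x i) := fun i ↦ by
    rw [hSig, hSig, sum_range_succ, add_assoc]
  simpa only [hSig_zero] using
    PosDef.sum_min_one_le_two_mul_log_det_div (hSig_zero ▸ hSig0) x hSig_succ k

theorem elliptical_potential {d K : ℕ} (Sig0 : Matrix (Fin d) (Fin d) ℝ)
    (hSig0 : Sig0.PosDef) (x : ℕ → Fin d → ℝ)
    (Sig : ℕ → Matrix (Fin d) (Fin d) ℝ)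
    (hSig : ∀ k, Sig k = Sig0 + ∑ i ∈ Finset.range k, vecMulVec (x i) (x i))
    (k : ℕ) (hk : k ≤ K) :
    ∑ i ∈ Finset.range k, min 1 (x i ⬝ᵥ (Sig i)⁻¹.mulVec (x i)) ≤
      2 * Real.log ((Sig k).det / Sig0.det) :=
  elliptical_potential_general Sig0 hSig0 x Sig hSig k
end
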